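/- For the Texas Chainsaw Josephus game with qk soldiers (q ≥ 1, k ≥ 1): T(qk, k) = (k+1)(q - (k+1)^b), where b = ⌊log_{k+1} q⌋ (i.e., b is the largest integer with (k+1)^b ≤ q). -/

import Mathlib

/-- One soldier (the head of the list) is skipped: moved to the back of the circle. -/
def skipOne (s : List (ℕ × ℕ)) : List (ℕ × ℕ) :=
  match s with
  | [] => []
  | p :: rest => rest ++ [p]

/-- The next alive soldier (head) loses one life; removed if dead.
    Does nothing once at most one soldier remains. -/
def hitOne (s : List (ℕ × ℕ)) : List (ℕ × ℕ) :=
  match s with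
  | [] => []
  | [p] => [p]
  | (x, l) :: rest => if l ≤ 1 then rest else rest ++ [(x, l - 1)]

/-- One round: skip one soldier, then hit the next `k` soldiers. -/
def felineRound (k : ℕ) (s : List (ℕ × ℕ)) : List (ℕ × ℕ) :=
  hitOne^[k] (skipOne s)

/-- Run the game with the given fuel, returning the survivor's label. -/
def felineRun (k : ℕ) : ℕ → List (ℕ × ℕ) → ℕ
  | 0, s => (s.headD (0, 0)).1
  | fuel + 1, s =>
    if s.length ≤ 1 then (s.headD (0, 0)).1
    else felineRun k fuel (felineRound k s)

/-- The survivor of the Feline Texas Chainsaw Josephus game with `n` soldiers,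
    parameter `k`, and `ℓ` lives each. -/
def felineT (n k ℓ : ℕ) : ℕ :=
  felineRun k (n * ℓ + 1) ((List.range n).map (fun i => (i, ℓ)))

/-- The survivor of the Texas Chainsaw Josephus game (one life each). -/
def chainsawT (n k : ℕ) : ℕ := felineT n k 1

/-- One-second steps of the one-life game, recording the elimination order.
    `c` is the number of eliminations remaining before the next skip. -/
def elimSteps (k : ℕ) : ℕ → ℕ → List ℕ → List ℕ
  | 0, _, s => s
  | fuel + 1, c, s =>
    match s with
    | [] => []
    | [x] => [x]
    | a :: rest =>
      if c = 0 then elimSteps k fuel k (rest ++ [a])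
      else a :: elimSteps k fuel (c - 1) rest

/-- The order in which soldiers are eliminated (the survivor is listed last). -/
def elimOrder (n k : ℕ) : List ℕ := elimSteps k ((k + 2) * (n + 1) * (n + 1)) 0 (List.range n)

/-- The second at which soldier `x` is eliminated (1-indexed position in the
    elimination order). -/
def elimTime (n k x : ℕ) : ℕ := (elimOrder n k).idxOf x + 1

/-! In the game on `m + k ≥ k + 1` soldiers the first round skips soldier `0` and kills soldiers
`1, …, k`; the `m` survivors, read from soldier `k + 1` onwards, then play the game on `m` soldiers,
so `T(m + k, k) = (T(m, k) + k + 1) mod (m + k)`. Starting from `T(k, k) = 0` and adding `k`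
soldiers at a time, the value `(k + 1)(q - (k + 1)^b)` grows by `k + 1` until it reaches `(q + 1)k`,
which happens exactly when `q + 1` is a power of `k + 1`; there it wraps around to `0`. -/

/- With one life each, `hitOne` just removes the head, so every round shrinks the circle and the fuel
of `felineRun` is never exhausted early. -/
def AllOneLife (s : List (ℕ × ℕ)) : Prop := ∀ p ∈ s, p.2 = 1

section Moves

variable {s : List (ℕ × ℕ)}

lemma skipOne_eq_rotate (s : List (ℕ × ℕ)) : skipOne s = s.rotate 1 := by
  cases s <;> simp [skipOne]

lemma skipOne_map (f : ℕ × ℕ → ℕ × ℕ) (s : List (ℕ × ℕ)) :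
    skipOne (s.map f) = (skipOne s).map f := by
  simp only [skipOne_eq_rotate, List.map_rotate]

lemma hitOne_map (g : ℕ → ℕ) (s : List (ℕ × ℕ)) :
    hitOne (s.map (Prod.map g id)) = (hitOne s).map (Prod.map g id) := by
  match s with
  | [] => rfl
  | [_] => rfl
  | (_, l) :: _ :: _ => by_cases hl : l ≤ 1 <;> simp [hitOne, hl]

lemma felineRound_map (k : ℕ) (g : ℕ → ℕ) (s : List (ℕ × ℕ)) :
    felineRound k (s.map (Prod.map g id)) = (felineRound k s).map (Prod.map g id) := by
  rw [felineRound, felineRound, skipOne_map]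
  exact Function.Commute.iterate_left (hitOne_map g) k _

lemma length_hitOne_le (s : List (ℕ × ℕ)) : (hitOne s).length ≤ s.length := by
  match s with
  | [] => rfl
  | [_] => rfl
  | (_, l) :: _ :: _ => by_cases hl : l ≤ 1 <;> simp [hitOne, hl]

lemma hitOne_ne_nil (hs : s ≠ []) : hitOne s ≠ [] := by
  match s with
  | [_] => simp [hitOne]
  | (_, l) :: _ :: _ => by_cases hl : l ≤ 1 <;> simp [hitOne, hl]

lemma felineRound_ne_nil (k : ℕ) (hs : s ≠ []) : felineRound k s ≠ [] := by
  refine Function.Iterate.rec (· ≠ []) ?_ (fun _ => hitOne_ne_nil) k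
  simpa [skipOne_eq_rotate] using hs

lemma AllOneLife.skipOne (h : AllOneLife s) : AllOneLife (skipOne s) := by
  intro p hp
  rw [skipOne_eq_rotate, List.mem_rotate] at hp
  exact h p hp

lemma AllOneLife.tail (h : AllOneLife s) : AllOneLife s.tail :=
  fun p hp => h p (List.mem_of_mem_tail hp)

lemma hitOne_eq_tail (h : AllOneLife s) (hs : 2 ≤ s.length) : hitOne s = s.tail := by
  match s with
  | (x, l) :: _ :: _ =>
    have hl : l = 1 := h (x, l) List.mem_cons_self
    simp [hitOne, hl]

lemma AllOneLife.hitOne (h : AllOneLife s) : AllOneLife (hitOne s) := by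
  match s with
  | [] => exact h
  | [_] => exact h
  | _ :: _ :: _ => rw [hitOne_eq_tail h (by simp)]; exact h.tail

lemma AllOneLife.felineRound (k : ℕ) (h : AllOneLife s) : AllOneLife (felineRound k s) :=
  Function.Iterate.rec AllOneLife h.skipOne (fun _ => AllOneLife.hitOne) k

lemma hitOne_iterate_eq_drop {j : ℕ} (h : AllOneLife s) (hj : j < s.length) :
    hitOne^[j] s = s.drop j := by
  induction j generalizing s with
  | zero => rfl
  | succ j ih =>
    rw [Function.iterate_succ_apply, hitOne_eq_tail h (by omega),
      ih h.tail (by simp; omega), List.drop_tail]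

lemma length_felineRound_lt {k : ℕ} (hk : 1 ≤ k) (h : AllOneLife s) (hs : 2 ≤ s.length) :
    (felineRound k s).length < s.length := by
  obtain ⟨k, rfl⟩ := Nat.exists_eq_add_of_le' hk
  have hskip : (skipOne s).length = s.length := by simp [skipOne_eq_rotate]
  have hfirst : (hitOne (skipOne s)).length = s.length - 1 := by
    rw [hitOne_eq_tail h.skipOne (by omega), List.length_tail, hskip]
  have hrest : (felineRound (k + 1) s).length ≤ (hitOne (skipOne s)).length :=
    Function.Iterate.rec (·.length ≤ (hitOne (skipOne s)).length) le_rfl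
      (fun t ht => (length_hitOne_le t).trans ht) k
  omega

end Moves

section Run

variable {k : ℕ} {s : List (ℕ × ℕ)}

lemma felineRun_map (g : ℕ → ℕ) (f : ℕ) (hs : s ≠ []) :
    felineRun k f (s.map (Prod.map g id)) = g (felineRun k f s) := by
  induction f generalizing s with
  | zero =>
    obtain ⟨p, t, rfl⟩ := List.exists_cons_of_ne_nil hs
    rfl
  | succ f ih =>
    obtain ⟨p, t, rfl⟩ := List.exists_cons_of_ne_nil hs
    simp only [felineRun, List.length_map]
    split_ifs
    · rfl
    · rw [felineRound_map, ih (felineRound_ne_nil k hs)]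

lemma felineRun_succ_of_length_le (hk : 1 ≤ k) (h : AllOneLife s) {f : ℕ}
    (hs : s.length ≤ f + 1) : felineRun k (f + 1) s = felineRun k f s := by
  induction f generalizing s with
  | zero => simp [felineRun, hs]
  | succ f ih =>
    by_cases hs1 : s.length ≤ 1
    · simp [felineRun, hs1]
    · have hlt := length_felineRound_lt hk h (by omega)
      have hround (g : ℕ) : felineRun k (g + 1) s = felineRun k g (felineRound k s) := by
        rw [felineRun, if_neg hs1]
      rw [hround, hround, ih (h.felineRound k) (by omega)]

lemma felineRun_eq_of_le (hk : 1 ≤ k) (h : AllOneLife s) {f f' : ℕ}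
    (hs : s.length ≤ f + 1) (hf : f ≤ f') : felineRun k f' s = felineRun k f s := by
  induction f', hf using Nat.le_induction with
  | base => rfl
  | succ f' hf ih => rw [felineRun_succ_of_length_le hk h (by omega), ih]

lemma felineRun_singleton (f : ℕ) (p : ℕ × ℕ) : felineRun k f [p] = p.1 := by
  cases f <;> simp [felineRun]

end Run

lemma allOneLife_range (n : ℕ) : AllOneLife ((List.range n).map (·, 1)) := by
  simp [AllOneLife]

lemma chainsawT_eq_felineRun (n k : ℕ) :
    chainsawT n k = felineRun k (n + 1) ((List.range n).map (·, 1)) := by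
  rw [chainsawT, felineT, mul_one]

lemma drop_rotate_one_range (n k : ℕ) :
    ((List.range n).rotate 1).drop k = (List.range (n - k)).map (fun i => (i + k + 1) % n) := by
  refine List.ext_getElem (by simp) fun i h _ => ?_
  simp [List.getElem_rotate, Nat.add_comm k i]

lemma felineRound_range {n k : ℕ} (hkn : k < n) :
    felineRound k ((List.range n).map (·, 1)) =
      ((List.range (n - k)).map (·, 1)).map (Prod.map (fun i => (i + k + 1) % n) id) := by
  rw [felineRound, hitOne_iterate_eq_drop (allOneLife_range n).skipOne
      (by simpa [skipOne_eq_rotate] using hkn),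
    skipOne_eq_rotate, ← List.map_rotate, ← List.map_drop, drop_rotate_one_range,
    List.map_map, List.map_map]
  rfl

lemma chainsawT_self {k : ℕ} (hk : 1 ≤ k) : chainsawT k k = 0 := by
  obtain ⟨j, rfl⟩ := Nat.exists_eq_add_of_le' hk
  rcases j.eq_zero_or_pos with rfl | hj
  · rfl
  have hround : felineRound (j + 1) ((List.range (j + 1)).map (·, 1)) = [(0, 1)] := by
    rw [felineRound, Function.iterate_succ_apply', hitOne_iterate_eq_drop
        (allOneLife_range _).skipOne (by simp [skipOne_eq_rotate]),
      skipOne_eq_rotate, ← List.map_rotate, ← List.map_drop, drop_rotate_one_range]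
    simp [hitOne]
  rw [chainsawT_eq_felineRun, felineRun, if_neg (by simp; omega), hround, felineRun_singleton]

lemma chainsawT_add_self {m k : ℕ} (hm : 1 ≤ m) (hk : 1 ≤ k) :
    chainsawT (m + k) k = (chainsawT m k + k + 1) % (m + k) := by
  rw [chainsawT_eq_felineRun, felineRun, if_neg (by simp; omega), felineRound_range (by omega),
    Nat.add_sub_cancel, felineRun_map _ _ (by simp; omega),
    felineRun_eq_of_le hk (allOneLife_range m) (f := m + 1) (by simp; omega) (by omega),
    ← chainsawT_eq_felineRun]

def chainsawFormula (q k : ℕ) : ℕ := (k + 1) * (q - (k + 1) ^ Nat.log (k + 1) q)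

lemma chainsawFormula_succ {q k : ℕ} (hq : 1 ≤ q) (hk : 1 ≤ k) :
    chainsawFormula (q + 1) k = (chainsawFormula q k + k + 1) % (q * k + k) := by
  rw [chainsawFormula, chainsawFormula, eq_comm]
  obtain ⟨b, hb⟩ : ∃ b, Nat.log (k + 1) q = b := ⟨_, rfl⟩
  have hle : (k + 1) ^ b ≤ q := hb ▸ Nat.pow_log_le_self _ (by omega)
  have hlt : q < (k + 1) ^ b * (k + 1) :=
    hb ▸ pow_succ (k + 1) _ ▸ Nat.lt_pow_succ_log_self (by omega) q
  obtain ⟨r, rfl⟩ := Nat.exists_eq_add_of_le hle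
  rw [hb, Nat.add_sub_cancel_left]
  rcases Nat.lt_or_ge (r + 1) ((k + 1) ^ b * k) with hr | hr
  · have hlog : Nat.log (k + 1) ((k + 1) ^ b + r + 1) = b :=
      Nat.log_eq_of_pow_le_of_lt_pow (by omega) (by rw [pow_succ]; linarith)
    rw [hlog, Nat.add_assoc _ r 1, Nat.add_sub_cancel_left, Nat.mod_eq_of_lt (by nlinarith)]
    ring
  · have hr1 : r + 1 = (k + 1) ^ b * k := by linarith
    have hq1 : (k + 1) ^ b + r + 1 = (k + 1) ^ (b + 1) := by rw [pow_succ]; linarith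
    have hfull : (k + 1) * r + k + 1 = ((k + 1) ^ b + r) * k + k := by linear_combination hr1
    rw [hq1, Nat.log_pow (by omega), Nat.sub_self, Nat.mul_zero, hfull, Nat.mod_self]

/-- For the Texas Chainsaw Josephus game with `qk` soldiers:
`T(qk, k) = (k+1)(q - (k+1)^b)` where `b = ⌊log_{k+1} q⌋`. -/
theorem chainsaw_qk (q k b : ℕ) (hq : 1 ≤ q) (hk : 1 ≤ k)
    (hb : b = Nat.log (k + 1) q) :
    chainsawT (q * k) k = (k + 1) * (q - (k + 1) ^ b) := by
  subst hb
  change chainsawT (q * k) k = chainsawFormula q k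
  induction q, hq using Nat.le_induction with
  | base => simp [chainsawT_self hk, chainsawFormula]
  | succ q hq ih =>
    rw [Nat.succ_mul, chainsawT_add_self (Nat.mul_pos hq hk) hk, ih, chainsawFormula_succ hq hk]
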